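/- arXiv:1207.1691 — 8 statements merged into one kernel-verified Lean document; each statement's English description precedes it below -/
import Mathlib

section
/- A linear pencil A(x) = A_0 + x_1 A_1 + ... + x_n A_n of symmetric real α×α matrices is strongly infeasible (i.e., the distance between {A(x) : x ∈ ℝ^n} and the cone of positive semidefinite α×α matrices is positive) if and only if there exist c ≥ 0 and finitely many vectors u_i ∈ ℝ^α such that -1 = c + Σ_i u_i^* A(x) u_i as a polynomial identity in x (equivalently, Σ_i u_i^* A_j u_i = 0 for j = 1,...,n and Σ_i u_i^* A_0 u_i = -1 - c). -/
/-!
The positive distance between the affine space `{A(x)}` and the PSD cone lets one separate the two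
by a continuous functional `φ` with `φ ≥ 0` on the cone and `φ ≤ -1` on the pencil. A functional
bounded above on an affine space is constant on it, so `φ(Aⱼ) = 0` and `φ(A₀) ≤ -1`; and a
functional nonnegative on the PSD cone is, on symmetric matrices, `M ↦ ∑ᵢ uᵢᵀ M uᵢ`, because its
symmetric representing matrix is PSD, hence a sum of rank-one matrices `uᵢ uᵢᵀ`. Conversely such
a certificate is a functional of this kind, and `1 ≤ φ(B) - φ(A(x)) ≤ ‖φ‖ ‖A(x) - B‖` bounds the
distance from below.
-/

open MvPolynomial Matrix
attribute [local instance] Matrix.frobeniusNormedAddCommGroup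

noncomputable section

abbrev RP (n : ℕ) := MvPolynomial (Fin n) ℝ

/-- Evaluation of the linear pencil `A₀ + ∑ xᵢ Aᵢ` at a point `x ∈ ℝⁿ`. -/
def pencilEval {n α : ℕ} (A0 : Matrix (Fin α) (Fin α) ℝ) (A : Fin n → Matrix (Fin α) (Fin α) ℝ)
    (x : Fin n → ℝ) : Matrix (Fin α) (Fin α) ℝ :=
  A0 + ∑ i, x i • A i

/-- The linear pencil `A₀ + ∑ xᵢ Aᵢ` as a matrix of polynomials. -/
def pencilPoly {n α : ℕ} (A0 : Matrix (Fin α) (Fin α) ℝ) (A : Fin n → Matrix (Fin α) (Fin α) ℝ) :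
    Matrix (Fin α) (Fin α) (RP n) :=
  A0.map C + ∑ i, (X i : RP n) • (A i).map C

/-- `v^* M v` for a matrix of polynomials. -/
def quadForm {n α : ℕ} (M : Matrix (Fin α) (Fin α) (RP n)) (v : Fin α → RP n) : RP n :=
  v ⬝ᵥ (M *ᵥ v)

/-- A sum of squares of polynomials. -/
def IsSos {n : ℕ} (p : RP n) : Prop := ∃ (k : ℕ) (q : Fin k → RP n), p = ∑ i, q i ^ 2

/-- An sos-matrix: a finite sum `∑ vⱼ vⱼ^*` with `vⱼ` vectors of polynomials. -/
def IsSosMatrix {n α : ℕ} (S : Matrix (Fin α) (Fin α) (RP n)) : Prop :=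
  ∃ (k : ℕ) (v : Fin k → Fin α → RP n), S = ∑ j, Matrix.vecMulVec (v j) (v j)

/-- Membership in the quadratic module `M_A` associated to the pencil. -/
def InQuadModule {n α : ℕ} (A0 : Matrix (Fin α) (Fin α) ℝ)
    (A : Fin n → Matrix (Fin α) (Fin α) ℝ) (p : RP n) : Prop :=
  ∃ s, IsSos s ∧ ∃ (k : ℕ) (v : Fin k → Fin α → RP n),
    p = s + ∑ j, quadForm (pencilPoly A0 A) (v j)

/-- Strong infeasibility: positive distance (Frobenius norm) between the range of the
pencil and the PSD cone. -/
def StronglyInfeasible {n α : ℕ} (A0 : Matrix (Fin α) (Fin α) ℝ)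
    (A : Fin n → Matrix (Fin α) (Fin α) ℝ) : Prop :=
  ∃ ε > (0:ℝ), ∀ (x : Fin n → ℝ) (B : Matrix (Fin α) (Fin α) ℝ), B.PosSemidef →
    ε ≤ dist (pencilEval A0 A x) B

attribute [local instance] Matrix.frobeniusNormedSpace

section Separation

open scoped Pointwise

variable {E : Type*} [NormedAddCommGroup E] [NormedSpace ℝ E] {S K : Set E}

/-- Separate the `ε`-ball around `0` from `S - K`; as `K` is a cone, the separating functional is
nonnegative on `K`, and it stays a fixed positive amount away from `0` on `S`. -/
theorem exists_strongDual_of_forall_le_dist (hS : Convex ℝ S) (hK : Convex ℝ K) (hK0 : 0 ∈ K)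
    (hKsmul : ∀ t : ℝ, 0 ≤ t → ∀ y ∈ K, t • y ∈ K)
    (hdist : ∃ ε > 0, ∀ x ∈ S, ∀ y ∈ K, ε ≤ dist x y) :
    ∃ φ : StrongDual ℝ E, (∀ y ∈ K, 0 ≤ φ y) ∧ ∀ x ∈ S, φ x ≤ -1 := by
  obtain rfl | ⟨x₀, hx₀⟩ := S.eq_empty_or_nonempty
  · exact ⟨0, by simp, by simp⟩
  obtain ⟨ε, hε, hdist⟩ := hdist
  have hdisj : Disjoint (Metric.ball 0 ε) (S - K) := by
    refine Set.disjoint_left.2 fun z hz ⟨x, hx, y, hy, hxy⟩ => ?_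
    rw [mem_ball_zero_iff, ← hxy, ← dist_eq_norm] at hz
    exact (hdist x hx y hy).not_gt hz
  obtain ⟨f, u, hball, hsub⟩ :=
    geometric_hahn_banach_open (convex_ball 0 ε) Metric.isOpen_ball (hS.sub hK) hdisj
  have hu : 0 < u := by simpa using hball 0 (Metric.mem_ball_self hε)
  have hgap : ∀ x ∈ S, ∀ y ∈ K, u ≤ f x - f y := fun x hx y hy => by
    simpa using hsub _ (Set.sub_mem_sub hx hy)
  have hfS : ∀ x ∈ S, u ≤ f x := fun x hx => by simpa using hgap x hx 0 hK0
  have hfK : ∀ y ∈ K, f y ≤ 0 := by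
    intro y hy
    by_contra! hy'
    have hscale := hgap x₀ hx₀ _ (hKsmul _ (div_pos (hu.trans_le (hfS x₀ hx₀)) hy').le y hy)
    rw [map_smul, smul_eq_mul, div_mul_cancel₀ _ hy'.ne', sub_self] at hscale
    exact hu.not_ge hscale
  refine ⟨-u⁻¹ • f, fun y hy => ?_, fun x hx => ?_⟩
  · simpa using mul_nonneg (inv_pos.2 hu).le (neg_nonneg.2 (hfK y hy))
  · have : 1 ≤ u⁻¹ * f x := by rw [inv_mul_eq_div, one_le_div hu]; exact hfS x hx
    simpa using neg_le_neg this

theorem exists_le_dist_of_strongDual (φ : StrongDual ℝ E) (hK : ∀ y ∈ K, 0 ≤ φ y)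
    (hS : ∀ x ∈ S, φ x ≤ -1) : ∃ ε > 0, ∀ x ∈ S, ∀ y ∈ K, ε ≤ dist x y := by
  refine ⟨(‖φ‖ + 1)⁻¹, by positivity, fun x hx y hy => ?_⟩
  rw [inv_le_iff_one_le_mul₀' (by positivity)]
  calc (1 : ℝ) ≤ φ y - φ x := by linarith [hK y hy, hS x hx]
    _ = φ (y - x) := (map_sub φ y x).symm
    _ ≤ ‖φ‖ * ‖y - x‖ := (le_abs_self _).trans (φ.le_opNorm _)
    _ ≤ (‖φ‖ + 1) * dist x y := by
      rw [dist_comm, dist_eq_norm]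
      nlinarith [norm_nonneg (y - x)]

end Separation

section Representation

variable {ι : Type*}

theorem convex_setOf_posSemidef : Convex ℝ {B : Matrix ι ι ℝ | B.PosSemidef} :=
  fun _ hA _ hB _ _ ha hb _ => (hA.smul ha).add (hB.smul hb)

variable [Fintype ι]

def sumQuadForm {k : ℕ} (u : Fin k → ι → ℝ) : Matrix ι ι ℝ →ₗ[ℝ] ℝ where
  toFun M := ∑ i, u i ⬝ᵥ (M *ᵥ u i)
  map_add' M N := by simp [add_mulVec, dotProduct_add, Finset.sum_add_distrib]
  map_smul' c M := by simp [smul_mulVec, Finset.mul_sum]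

theorem sumQuadForm_apply {k : ℕ} (u : Fin k → ι → ℝ) (M : Matrix ι ι ℝ) :
    sumQuadForm u M = ∑ i, u i ⬝ᵥ (M *ᵥ u i) :=
  rfl

theorem sumQuadForm_nonneg {k : ℕ} (u : Fin k → ι → ℝ) {B : Matrix ι ι ℝ} (hB : B.PosSemidef) :
    0 ≤ sumQuadForm u B := by
  rw [sumQuadForm_apply]
  exact Finset.sum_nonneg fun i _ => by simpa using hB.dotProduct_mulVec_nonneg (u i)

theorem sumQuadForm_eq_sum_mul {k : ℕ} (u : Fin k → ι → ℝ) (M : Matrix ι ι ℝ) :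
    sumQuadForm u M = ∑ a, ∑ b, M a b * (∑ i, vecMulVec (u i) (u i)) a b := by
  simp only [sumQuadForm, LinearMap.coe_mk, AddHom.coe_mk, dotProduct, mulVec, Matrix.sum_apply,
    vecMulVec_apply, Finset.mul_sum]
  rw [Finset.sum_comm]
  refine Finset.sum_congr rfl fun a _ => ?_
  rw [Finset.sum_comm]
  exact Finset.sum_congr rfl fun b _ => Finset.sum_congr rfl fun i _ => by ring

variable [DecidableEq ι]

theorem LinearMap.apply_eq_sum_mul_single (f : Matrix ι ι ℝ →ₗ[ℝ] ℝ) (M : Matrix ι ι ℝ) :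
    f M = ∑ a, ∑ b, M a b * f (Matrix.single a b 1) := by
  conv_lhs => rw [matrix_eq_sum_single M]
  simp only [map_sum]
  refine Finset.sum_congr rfl fun a _ => Finset.sum_congr rfl fun b _ => ?_
  rw [show Matrix.single a b (M a b) = M a b • Matrix.single a b 1 by simp, map_smul, smul_eq_mul]

def symmRepr (f : Matrix ι ι ℝ →ₗ[ℝ] ℝ) : Matrix ι ι ℝ :=
  Matrix.of fun a b => (f (Matrix.single a b 1) + f (Matrix.single b a 1)) / 2

theorem LinearMap.apply_eq_sum_mul_symmRepr (f : Matrix ι ι ℝ →ₗ[ℝ] ℝ) {M : Matrix ι ι ℝ}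
    (hM : M.IsSymm) : f M = ∑ a, ∑ b, M a b * symmRepr f a b := by
  have hswap : ∑ a, ∑ b, M a b * f (Matrix.single b a 1)
      = ∑ a, ∑ b, M a b * f (Matrix.single a b 1) := by
    rw [Finset.sum_comm]
    simp_rw [hM.apply]
  simp only [symmRepr, of_apply, mul_div_assoc', mul_add, ← Finset.sum_div,
    Finset.sum_add_distrib, hswap]
  rw [f.apply_eq_sum_mul_single]
  ring

theorem posSemidef_symmRepr {f : Matrix ι ι ℝ →ₗ[ℝ] ℝ}
    (hf : ∀ B : Matrix ι ι ℝ, B.PosSemidef → 0 ≤ f B) : (symmRepr f).PosSemidef := by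
  refine .of_dotProduct_mulVec_nonneg ?_ fun x => ?_
  · ext a b
    simp only [conjTranspose_apply, symmRepr, of_apply, star_trivial]
    ring
  · have hx := posSemidef_vecMulVec_self_star x
    have h := hf _ hx
    rw [f.apply_eq_sum_mul_symmRepr (isHermitian_iff_isSymm.1 hx.isHermitian)] at h
    refine h.trans_eq ?_
    simp only [dotProduct, mulVec, vecMulVec_apply, star_trivial, Finset.mul_sum]
    exact Finset.sum_congr rfl fun a _ => Finset.sum_congr rfl fun b _ => by ring

theorem exists_sumQuadForm_eq (f : Matrix ι ι ℝ →ₗ[ℝ] ℝ)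
    (hf : ∀ B : Matrix ι ι ℝ, B.PosSemidef → 0 ≤ f B) :
    ∃ (k : ℕ) (u : Fin k → ι → ℝ), ∀ M : Matrix ι ι ℝ, M.IsSymm → f M = sumQuadForm u M := by
  obtain ⟨k, u, hu⟩ := posSemidef_iff_eq_sum_vecMulVec.1 (posSemidef_symmRepr hf)
  refine ⟨k, u, fun M hM => ?_⟩
  rw [sumQuadForm_eq_sum_mul, f.apply_eq_sum_mul_symmRepr hM, hu]
  simp only [star_trivial]

end Representation

theorem forall_add_sum_mul_le_iff {ι : Type*} [Fintype ι] [DecidableEq ι] {a c : ℝ} {b : ι → ℝ} :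
    (∀ x : ι → ℝ, a + ∑ j, x j * b j ≤ c) ↔ (∀ j, b j = 0) ∧ a ≤ c := by
  refine ⟨fun h => ⟨fun j => ?_, by simpa using h 0⟩, fun ⟨hb, ha⟩ x => by simpa [hb] using ha⟩
  by_contra hj
  have := h (Pi.single j ((c - a + 1) / b j))
  simp only [Pi.single_apply, ite_mul, zero_mul, Finset.sum_ite_eq', Finset.mem_univ, ↓reduceIte,
    div_mul_cancel₀ _ hj] at this
  linarith

section Pencil

variable {n α : ℕ} (A0 : Matrix (Fin α) (Fin α) ℝ) (A : Fin n → Matrix (Fin α) (Fin α) ℝ)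

theorem convex_range_pencilEval : Convex ℝ (Set.range (pencilEval A0 A)) := by
  have : pencilEval A0 A = (A0 + ·) ∘ Fintype.linearCombination ℝ A := rfl
  rw [this, Set.range_comp, ← Set.image_univ]
  exact (convex_univ.linear_image _).translate A0

theorem forall_map_pencilEval_le_iff {F : Type*} [FunLike F (Matrix (Fin α) (Fin α) ℝ) ℝ]
    [LinearMapClass F ℝ (Matrix (Fin α) (Fin α) ℝ) ℝ] (φ : F) {c : ℝ} :
    (∀ x, φ (pencilEval A0 A x) ≤ c) ↔ (∀ j, φ (A j) = 0) ∧ φ A0 ≤ c := by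
  simp only [pencilEval, map_add, map_sum, map_smul, smul_eq_mul]
  exact forall_add_sum_mul_le_iff

end Pencil

/-- Sturm's lemma: a linear pencil is strongly infeasible iff `-1 ∈ C_A`, i.e. there are
`c ≥ 0` and vectors `uᵢ ∈ ℝ^α` with `-1 = c + ∑ᵢ uᵢ^* A uᵢ` as polynomials (equivalently,
`∑ᵢ uᵢ^* Aⱼ uᵢ = 0` for `j = 1,…,n` and `∑ᵢ uᵢ^* A₀ uᵢ = -1 - c`). -/
theorem stmt_0 {n α : ℕ} (A0 : Matrix (Fin α) (Fin α) ℝ)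
    (A : Fin n → Matrix (Fin α) (Fin α) ℝ) (hA0 : A0.IsSymm) (hA : ∀ i, (A i).IsSymm) :
    StronglyInfeasible A0 A ↔
      ∃ c ≥ (0:ℝ), ∃ (k : ℕ) (u : Fin k → Fin α → ℝ),
        (∑ i, u i ⬝ᵥ (A0 *ᵥ u i)) = -1 - c ∧ ∀ j, (∑ i, u i ⬝ᵥ (A j *ᵥ u i)) = 0 := by
  constructor
  · rintro ⟨ε, hε, hdist⟩
    obtain ⟨φ, hφ_psd, hφ_pencil⟩ := exists_strongDual_of_forall_le_dist
      (convex_range_pencilEval A0 A) convex_setOf_posSemidef PosSemidef.zero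
      (fun t ht B hB => hB.smul ht) ⟨ε, hε, by rintro _ ⟨x, rfl⟩ B hB; exact hdist x B hB⟩
    obtain ⟨hφA, hφA0⟩ :=
      (forall_map_pencilEval_le_iff A0 A φ).1 fun x => hφ_pencil _ ⟨x, rfl⟩
    obtain ⟨k, u, hu⟩ := exists_sumQuadForm_eq (φ : Matrix (Fin α) (Fin α) ℝ →ₗ[ℝ] ℝ) hφ_psd
    refine ⟨-1 - φ A0, by linarith, k, u, ?_, fun j => ?_⟩
    · rw [← sumQuadForm_apply, ← hu A0 hA0]
      simp
    · rw [← sumQuadForm_apply, ← hu _ (hA j)]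
      simpa using hφA j
  · rintro ⟨c, hc, k, u, hu0, huA⟩
    have hpencil : ∀ x, sumQuadForm u (pencilEval A0 A x) ≤ -1 :=
      (forall_map_pencilEval_le_iff A0 A (sumQuadForm u)).2
        ⟨huA, by rw [sumQuadForm_apply, hu0]; linarith⟩
    obtain ⟨ε, hε, hdist⟩ := exists_le_dist_of_strongDual
      (S := Set.range (pencilEval A0 A)) (K := {B | B.PosSemidef})
      (LinearMap.toContinuousLinearMap (sumQuadForm u)) (fun B hB => sumQuadForm_nonneg u hB)
      (by rintro _ ⟨x, rfl⟩; exact hpencil x)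
    exact ⟨ε, hε, fun x B hB => hdist _ ⟨x, rfl⟩ B hB⟩
end
end

section
/- Let A be an infeasible linear pencil (S_A = ∅). Then A is weakly infeasible (infeasible but not strongly infeasible) if and only if for every ε > 0 the perturbed pencil A + ε·I_α is feasible, i.e., there exists x ∈ ℝ^n with A(x) + ε I_α ⪰ 0. -/
open MvPolynomial Matrix
attribute [local instance] Matrix.frobeniusNormedAddCommGroup

noncomputable section

/-! A Hermitian `E` of Frobenius norm at most `ε` satisfies `E + ε I ⪰ 0`, by Cauchy–Schwarz:
`|vᵀ E v| ≤ ‖E‖ ‖v‖²`. Hence a point `A(x)` within distance `ε` of a PSD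
matrix `B` has `A(x) + ε I = B + (A(x) - B + ε I)` PSD. Conversely, if every `A + δ I` is
feasible, then `A(x) + δ I` is a PSD matrix at distance `δ ‖I‖` from the range of the pencil,
and `δ ‖I‖` can be made arbitrarily small. -/

attribute [local instance] Matrix.frobeniusNormSMulClass

namespace Matrix

variable {m n : Type*} [Fintype m] [Fintype n]

lemma norm_toLp_mulVec_le {𝕜 : Type*} [RCLike 𝕜] (E : Matrix m n 𝕜) (v : n → 𝕜) :
    ‖WithLp.toLp 2 (E *ᵥ v)‖ ≤ ‖E‖ * ‖WithLp.toLp 2 v‖ := by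
  simpa only [← frobenius_norm_replicateCol (ι := Unit), replicateCol_mulVec] using
    frobenius_norm_mul E (replicateCol Unit v)

lemma abs_dotProduct_mulVec_le (E : Matrix n n ℝ) (v : n → ℝ) :
    |v ⬝ᵥ (E *ᵥ v)| ≤ ‖E‖ * (v ⬝ᵥ v) := by
  have hvv : v ⬝ᵥ v = ‖WithLp.toLp 2 v‖ ^ 2 := by
    rw [← real_inner_self_eq_norm_sq, EuclideanSpace.inner_toLp_toLp, star_trivial]
  calc |v ⬝ᵥ (E *ᵥ v)| = |inner ℝ (WithLp.toLp 2 v) (WithLp.toLp 2 (E *ᵥ v))| := by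
        rw [EuclideanSpace.inner_toLp_toLp, star_trivial, dotProduct_comm]
    _ ≤ ‖WithLp.toLp 2 v‖ * ‖WithLp.toLp 2 (E *ᵥ v)‖ := abs_real_inner_le_norm _ _
    _ ≤ ‖WithLp.toLp 2 v‖ * (‖E‖ * ‖WithLp.toLp 2 v‖) := by
        gcongr; exact norm_toLp_mulVec_le E v
    _ = ‖E‖ * (v ⬝ᵥ v) := by rw [hvv]; ring

lemma IsHermitian.posSemidef_add_smul_one [DecidableEq n] {E : Matrix n n ℝ}
    (hE : E.IsHermitian) {ε : ℝ} (hε : ‖E‖ ≤ ε) : (E + ε • (1 : Matrix n n ℝ)).PosSemidef := by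
  have hεI : (ε • (1 : Matrix n n ℝ)).IsHermitian := isHermitian_one.smul (.all ε)
  refine .of_dotProduct_mulVec_nonneg (hE.add hεI) fun v => ?_
  have hvv : 0 ≤ v ⬝ᵥ v := by simpa using dotProduct_self_star_nonneg v
  have hEv := neg_le_of_abs_le (abs_dotProduct_mulVec_le E v)
  have hεv : ‖E‖ * (v ⬝ᵥ v) ≤ ε * (v ⬝ᵥ v) := mul_le_mul_of_nonneg_right hε hvv
  simp only [star_trivial, add_mulVec, smul_mulVec, one_mulVec, dotProduct_add, dotProduct_smul,
    smul_eq_mul]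
  linarith

lemma IsHermitian.posSemidef_add_smul_one_of_dist_le [DecidableEq n] {M B : Matrix n n ℝ}
    (hM : M.IsHermitian) (hB : B.PosSemidef) {ε : ℝ} (h : dist M B ≤ ε) :
    (M + ε • (1 : Matrix n n ℝ)).PosSemidef := by
  have hMB := (hM.sub hB.1).posSemidef_add_smul_one (dist_eq_norm M B ▸ h)
  convert hB.add hMB using 1
  abel

end Matrix

lemma pencilEval_isHermitian {n α : ℕ} {A0 : Matrix (Fin α) (Fin α) ℝ}
    {A : Fin n → Matrix (Fin α) (Fin α) ℝ} (hA0 : A0.IsSymm) (hA : ∀ i, (A i).IsSymm)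
    (x : Fin n → ℝ) : (pencilEval A0 A x).IsHermitian :=
  isHermitian_iff_isSymm.mpr <| hA0.add <|
    Finset.sum_induction _ IsSymm (fun _ _ => IsSymm.add) isSymm_zero fun i _ => (hA i).smul (x i)

theorem stmt_1_general {n α : ℕ} (A0 : Matrix (Fin α) (Fin α) ℝ)
    (A : Fin n → Matrix (Fin α) (Fin α) ℝ) (hA0 : A0.IsSymm) (hA : ∀ i, (A i).IsSymm) :
    ¬ StronglyInfeasible A0 A ↔
      ∀ ε > (0:ℝ), ∃ x : Fin n → ℝ, (pencilEval A0 A x + ε • (1 : Matrix (Fin α) (Fin α) ℝ)).PosSemidef := by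
  constructor
  · intro hweak ε hε
    obtain ⟨x, B, hB, hdist⟩ : ∃ x B, B.PosSemidef ∧ dist (pencilEval A0 A x) B < ε := by
      by_contra! hfar
      exact hweak ⟨ε, hε, hfar⟩
    exact ⟨x, (pencilEval_isHermitian hA0 hA x).posSemidef_add_smul_one_of_dist_le hB hdist.le⟩
  · rintro hfeas ⟨ε, hε, hdist⟩
    obtain ⟨δ, hδ, hδε⟩ := exists_pos_mul_lt hε ‖(1 : Matrix (Fin α) (Fin α) ℝ)‖
    obtain ⟨x, hx⟩ := hfeas δ hδ
    have hεδ := hdist x _ hx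
    rw [dist_self_add_right, norm_smul, Real.norm_of_nonneg hδ.le] at hεδ
    linarith

/-- An infeasible pencil is weakly infeasible iff `A + ε I` is feasible for every `ε > 0`. -/
theorem stmt_1 {n α : ℕ} (A0 : Matrix (Fin α) (Fin α) ℝ)
    (A : Fin n → Matrix (Fin α) (Fin α) ℝ) (hA0 : A0.IsSymm) (hA : ∀ i, (A i).IsSymm)
    (hinf : ∀ x : Fin n → ℝ, ¬ (pencilEval A0 A x).PosSemidef) :
    ¬ StronglyInfeasible A0 A ↔
      ∀ ε > (0:ℝ), ∃ x : Fin n → ℝ, (pencilEval A0 A x + ε • (1 : Matrix (Fin α) (Fin α) ℝ)).PosSemidef :=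
  stmt_1_general A0 A hA0 hA
end
end

section
/- For a linear pencil A, the convex cone C_A = {c + Σ_i u_i^* A u_i : c ≥ 0, u_i ∈ ℝ^α} is a closed subset of the finite-dimensional vector space ℝ[x]_1 of linear polynomials, provided the spectrahedron S_A has nonempty interior. -/
/-!
Let `x` be an interior point of `S_A` and `M = A(x) ⪰ 0`. Since `A(x ± t eⱼ) ⪰ 0` for small `t`,
`ker M` lies in the kernel of every `Aⱼ` and of `A₀`, so `u ↦ u* Aⱼ u` only depends on `u` modulo
`ker M`; and since `∑ uᵢ uᵢ*` factors as `V* V` with `V` square, `α` vectors suffice. Hence `C_A`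
is the image of `[0, ∞) × Uᵅ`, `U` a complement of `ker M`, under a continuous map. Evaluating at
`x` sends `c + ∑ vᵢ* A vᵢ` to `c + ∑ vᵢ* M vᵢ ≥ c + λ ∑ ‖vᵢ‖²` with `λ > 0`, so this map is proper
on `[0, ∞) × Uᵅ` and its image is closed.
-/

open MvPolynomial Matrix
attribute [local instance] Matrix.frobeniusNormedAddCommGroup

noncomputable section

section MatrixFacts

variable {m : Type*} [Fintype m]

theorem Matrix.sum_dotProduct_mulVec_eq_trace {R ι : Type*} [CommSemiring R] [Fintype ι]
    (B : Matrix m m R) (U : Matrix ι m R) :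
    ∑ i, U i ⬝ᵥ (B *ᵥ U i) = trace (B * (Uᵀ * U)) := by
  simp only [trace, diag, mul_apply, transpose_apply, dotProduct, mulVec, Finset.mul_sum]
  rw [Finset.sum_comm]
  refine Finset.sum_congr rfl fun a _ => ?_
  rw [Finset.sum_comm]
  refine Finset.sum_congr rfl fun b _ => Finset.sum_congr rfl fun i _ => by ring

theorem Matrix.dotProduct_mulVec_add_of_mulVec_eq_zero {R : Type*} [CommSemiring R]
    {B : Matrix m m R} (hB : B.IsSymm) (p : m → R) {w : m → R} (hw : B *ᵥ w = 0) :
    (p + w) ⬝ᵥ (B *ᵥ (p + w)) = p ⬝ᵥ (B *ᵥ p) := by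
  have hw' : w ᵥ* B = 0 := by rw [← mulVec_transpose, hB, hw]
  rw [mulVec_add, hw, add_zero, add_dotProduct, dotProduct_mulVec w, hw', zero_dotProduct,
    add_zero]

open scoped ComplexOrder in
theorem Matrix.mulVec_eq_zero_of_posSemidef_add_sub {𝕜 : Type*} [RCLike 𝕜] {M B : Matrix m m 𝕜}
    (hadd : (M + B).PosSemidef) (hsub : (M - B).PosSemidef) {v : m → 𝕜} (hv : M *ᵥ v = 0) :
    B *ᵥ v = 0 := by
  have h₁ := hadd.dotProduct_mulVec_nonneg v
  have h₂ := hsub.dotProduct_mulVec_nonneg v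
  rw [add_mulVec, hv, zero_add] at h₁
  rw [sub_mulVec, hv, zero_sub, dotProduct_neg, neg_nonneg] at h₂
  have h₀ : star v ⬝ᵥ ((M + B) *ᵥ v) = 0 := by
    rw [add_mulVec, hv, zero_add]; exact le_antisymm h₂ h₁
  simpa [add_mulVec, hv] using (hadd.dotProduct_mulVec_zero_iff v).1 h₀

open scoped MatrixOrder in
/-- Both sides are `trace (B * P)` for the Gram matrix `P = Uᵀ U`, and `P ⪰ 0` factors as `Vᵀ V`
with `V` square. -/
theorem Matrix.exists_sum_dotProduct_mulVec_eq {ι : Type*} [Fintype ι] [DecidableEq m]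
    (u : ι → m → ℝ) :
    ∃ v : m → m → ℝ, ∀ B : Matrix m m ℝ, ∑ i, u i ⬝ᵥ (B *ᵥ u i) = ∑ i, v i ⬝ᵥ (B *ᵥ v i) := by
  obtain ⟨V, hV⟩ := CStarAlgebra.nonneg_iff_eq_star_mul_self.mp
    (posSemidef_conjTranspose_mul_self (of u)).nonneg
  refine ⟨V, fun B => ?_⟩
  rw [show u = of u from rfl, sum_dotProduct_mulVec_eq_trace, sum_dotProduct_mulVec_eq_trace]
  simpa [star_eq_conjTranspose] using congrArg (fun P => trace (B * P)) hV

end MatrixFacts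

theorem exists_pos_mul_norm_sq_le {E : Type*} [NormedAddCommGroup E] [NormedSpace ℝ E]
    [FiniteDimensional ℝ E] {q : E → ℝ} (hq : Continuous q)
    (hsmul : ∀ (t : ℝ) x, q (t • x) = t ^ 2 * q x) (hpos : ∀ x ≠ 0, 0 < q x) :
    ∃ c > 0, ∀ x, c * ‖x‖ ^ 2 ≤ q x := by
  have hq0 : q 0 = 0 := by simpa using hsmul 0 0
  rcases subsingleton_or_nontrivial E with hE | hE
  · exact ⟨1, one_pos, fun x => by simp [Subsingleton.elim x 0, hq0]⟩
  obtain ⟨x₁, hx₁, hmin⟩ := (isCompact_sphere (0 : E) 1).exists_isMinOn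
    (NormedSpace.sphere_nonempty.2 zero_le_one) hq.continuousOn
  refine ⟨q x₁, hpos x₁ (ne_zero_of_mem_unit_sphere ⟨x₁, hx₁⟩), fun x => ?_⟩
  rcases eq_or_ne x 0 with rfl | hx
  · simp [hq0]
  have hx' : ‖x‖⁻¹ • x ∈ Metric.sphere (0 : E) 1 := by simp [norm_smul, hx]
  calc q x₁ * ‖x‖ ^ 2 ≤ q (‖x‖⁻¹ • x) * ‖x‖ ^ 2 :=
        mul_le_mul_of_nonneg_right (hmin hx') (sq_nonneg _)
    _ = q x := by rw [hsmul]; field_simp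

theorem Matrix.PosSemidef.exists_pos_mul_norm_sq_le {m : Type*} [Fintype m]
    {M : Matrix m m ℝ} (hM : M.PosSemidef) {U : Submodule ℝ (m → ℝ)}
    (hU : Disjoint U (LinearMap.ker M.mulVecLin)) :
    ∃ c > 0, ∀ p ∈ U, c * ‖p‖ ^ 2 ≤ p ⬝ᵥ (M *ᵥ p) := by
  have hpos : ∀ p : U, p ≠ 0 → 0 < (p : m → ℝ) ⬝ᵥ (M *ᵥ p) := by
    refine fun p hp => (hM.dotProduct_mulVec_nonneg (p : m → ℝ)).lt_of_ne' fun h => hp ?_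
    have hker : M *ᵥ p = 0 := (hM.dotProduct_mulVec_zero_iff _).1 (by simpa using h)
    exact Subtype.ext (Submodule.disjoint_def.1 hU _ p.2 hker)
  obtain ⟨c, hc, hcq⟩ := _root_.exists_pos_mul_norm_sq_le (by fun_prop)
    (fun t p => by
      simp only [SetLike.val_smul, mulVec_smul, dotProduct_smul, smul_dotProduct, smul_eq_mul]
      ring) hpos
  exact ⟨c, hc, fun p hp => hcq ⟨p, hp⟩⟩

theorem IsClosed.image_of_norm_le {E F : Type*} [NormedAddCommGroup E] [ProperSpace E]
    [MetricSpace F] [ProperSpace F] {K : Set E} {f : E → F} {g : F → ℝ} (hK : IsClosed K)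
    (hf : Continuous f) (hg : Continuous g) (hfg : ∀ x ∈ K, ‖x‖ ≤ g (f x)) :
    IsClosed (f '' K) := by
  refine isClosed_of_closure_subset fun y hy => ?_
  obtain ⟨G, hG⟩ := (isCompact_closedBall y 1).bddAbove_image hg.continuousOn
  set K' := K ∩ f ⁻¹' Metric.closedBall y 1
  have hK' : IsCompact K' := Metric.isCompact_of_isClosed_isBounded
    (hK.inter (Metric.isClosed_closedBall.preimage hf))
    (isBounded_iff_forall_norm_le.2 ⟨G, fun x hx => (hfg x hx.1).trans (hG ⟨f x, hx.2, rfl⟩)⟩)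
  have hyK' : y ∈ closure (f '' K') := by
    rw [Metric.mem_closure_iff] at hy ⊢
    intro ε hε
    obtain ⟨_, ⟨x, hx, rfl⟩, hxy⟩ := hy (min ε 1) (lt_min hε one_pos)
    refine ⟨f x, ⟨x, ⟨hx, ?_⟩, rfl⟩, hxy.trans_le (min_le_left _ _)⟩
    rw [Set.mem_preimage, Metric.mem_closedBall, dist_comm]
    exact (hxy.trans_le (min_le_right _ _)).le
  exact Set.image_mono Set.inter_subset_left ((hK'.image hf).isClosed.closure_subset hyK')

section Pencil

variable {n α : ℕ} (A0 : Matrix (Fin α) (Fin α) ℝ) (A : Fin n → Matrix (Fin α) (Fin α) ℝ)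

theorem pencilEval_mulVec (x : Fin n → ℝ) (v : Fin α → ℝ) :
    pencilEval A0 A x *ᵥ v = A0 *ᵥ v + ∑ i, x i • (A i *ᵥ v) := by
  simp [pencilEval, add_mulVec, sum_mulVec, smul_mulVec]

theorem dotProduct_pencilEval_mulVec (x : Fin n → ℝ) (v : Fin α → ℝ) :
    v ⬝ᵥ (pencilEval A0 A x *ᵥ v) = v ⬝ᵥ (A0 *ᵥ v) + ∑ i, x i * (v ⬝ᵥ (A i *ᵥ v)) := by
  simp [pencilEval_mulVec, dotProduct_add, dotProduct_sum, dotProduct_smul]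

theorem pencilEval_add_single (x : Fin n → ℝ) (j : Fin n) (t : ℝ) :
    pencilEval A0 A (x + Pi.single j t) = pencilEval A0 A x + t • A j := by
  simp [pencilEval, add_smul, Finset.sum_add_distrib, Pi.single_apply, add_assoc]

variable {A0 A}

theorem mulVec_eq_zero_of_mem_interior {x : Fin n → ℝ}
    (hx : x ∈ interior {x | (pencilEval A0 A x).PosSemidef}) {v : Fin α → ℝ}
    (hv : pencilEval A0 A x *ᵥ v = 0) : A0 *ᵥ v = 0 ∧ ∀ j, A j *ᵥ v = 0 := by
  obtain ⟨ε, hε, hball⟩ := Metric.mem_nhds_iff.1 (mem_interior_iff_mem_nhds.1 hx)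
  have hpert : ∀ j t, |t| < ε → (pencilEval A0 A x + t • A j).PosSemidef := fun j t ht => by
    rw [← pencilEval_add_single]
    apply hball
    simpa [Pi.norm_single] using ht
  have hA : ∀ j, A j *ᵥ v = 0 := by
    intro j
    have ht : |ε / 2| < ε := by rw [abs_of_pos (half_pos hε)]; linarith
    have hsub : (pencilEval A0 A x - (ε / 2) • A j).PosSemidef := by
      simpa [sub_eq_add_neg] using hpert j (-(ε / 2)) (by rwa [abs_neg])
    have := mulVec_eq_zero_of_posSemidef_add_sub (hpert j _ ht) hsub hv
    rwa [smul_mulVec, smul_eq_zero, or_iff_right (half_pos hε).ne'] at this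
  refine ⟨?_, hA⟩
  simpa [pencilEval_mulVec, hA] using hv

variable (A0 A)

/-- The cone `C_A`, a linear polynomial `a₀ + ∑ aⱼ xⱼ` being recorded as `(a₀, a)`. -/
def pencilCone : Set (ℝ × (Fin n → ℝ)) :=
  {a | ∃ c ≥ (0:ℝ), ∃ (k : ℕ) (u : Fin k → Fin α → ℝ),
    a.1 = c + ∑ i, u i ⬝ᵥ (A0 *ᵥ u i) ∧ ∀ j, a.2 j = ∑ i, u i ⬝ᵥ (A j *ᵥ u i)}

def pencilConeMap (z : ℝ × (Fin α → Fin α → ℝ)) : ℝ × (Fin n → ℝ) :=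
  (z.1 + ∑ i, z.2 i ⬝ᵥ (A0 *ᵥ z.2 i), fun j => ∑ i, z.2 i ⬝ᵥ (A j *ᵥ z.2 i))

theorem continuous_pencilConeMap : Continuous (pencilConeMap A0 A) := by
  unfold pencilConeMap
  fun_prop

theorem pencilConeMap_fst_add_sum (x : Fin n → ℝ) (z : ℝ × (Fin α → Fin α → ℝ)) :
    (pencilConeMap A0 A z).1 + ∑ j, x j * (pencilConeMap A0 A z).2 j
      = z.1 + ∑ i, z.2 i ⬝ᵥ (pencilEval A0 A x *ᵥ z.2 i) := by
  simp only [pencilConeMap, dotProduct_pencilEval_mulVec, Finset.sum_add_distrib, Finset.mul_sum]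
  rw [Finset.sum_comm]
  ring

variable {A0 A}

theorem pencilCone_eq_image (hA0 : A0.IsSymm) (hA : ∀ j, (A j).IsSymm)
    {U W : Submodule ℝ (Fin α → ℝ)} (hUW : IsCompl U W)
    (hW : ∀ w ∈ W, A0 *ᵥ w = 0 ∧ ∀ j, A j *ᵥ w = 0) :
    pencilCone A0 A = pencilConeMap A0 A '' {z | 0 ≤ z.1 ∧ ∀ i, z.2 i ∈ U} := by
  ext a
  constructor
  · rintro ⟨c, hc, k, u, ha₀, ha⟩
    obtain ⟨v, hv⟩ := exists_sum_dotProduct_mulVec_eq u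
    choose p hp w hw hpw using fun i => Submodule.mem_sup.1 (hUW.sup_eq_top ▸ Submodule.mem_top :
      v i ∈ U ⊔ W)
    have hsum : ∀ B : Matrix (Fin α) (Fin α) ℝ, B.IsSymm → (∀ w ∈ W, B *ᵥ w = 0) →
        ∑ i, u i ⬝ᵥ (B *ᵥ u i) = ∑ i, p i ⬝ᵥ (B *ᵥ p i) := fun B hB hBW => by
      simp only [hv B, ← hpw, dotProduct_mulVec_add_of_mulVec_eq_zero hB _ (hBW _ (hw _))]
    refine ⟨(c, p), ⟨hc, hp⟩, Prod.ext ?_ (funext fun j => ?_)⟩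
    · rw [ha₀, hsum A0 hA0 fun w hw' => (hW w hw').1]; rfl
    · rw [ha j, hsum (A j) (hA j) fun w hw' => (hW w hw').2 j]; rfl
  · rintro ⟨z, ⟨hc, -⟩, rfl⟩
    exact ⟨z.1, hc, α, z.2, rfl, fun j => rfl⟩

theorem norm_le_of_pencilConeMap {x : Fin n → ℝ} (hx : (pencilEval A0 A x).PosSemidef)
    {U : Submodule ℝ (Fin α → ℝ)} {c : ℝ} (hc : 0 < c)
    (hcU : ∀ p ∈ U, c * ‖p‖ ^ 2 ≤ p ⬝ᵥ (pencilEval A0 A x *ᵥ p))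
    {z : ℝ × (Fin α → Fin α → ℝ)} (hz : 0 ≤ z.1 ∧ ∀ i, z.2 i ∈ U) :
    ‖z‖ ≤ ((pencilConeMap A0 A z).1 + ∑ j, x j * (pencilConeMap A0 A z).2 j)
      + √(((pencilConeMap A0 A z).1 + ∑ j, x j * (pencilConeMap A0 A z).2 j) / c) := by
  rw [pencilConeMap_fst_add_sum]
  have hnonneg : ∀ i, 0 ≤ z.2 i ⬝ᵥ (pencilEval A0 A x *ᵥ z.2 i) := fun i => by
    simpa using hx.dotProduct_mulVec_nonneg (z.2 i)
  have hsum := Finset.sum_nonneg fun i (_ : i ∈ Finset.univ) => hnonneg i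
  have hv : ‖z.2‖ ≤ √((z.1 + ∑ i, z.2 i ⬝ᵥ (pencilEval A0 A x *ᵥ z.2 i)) / c) := by
    refine (pi_norm_le_iff_of_nonneg (Real.sqrt_nonneg _)).2 fun i => Real.le_sqrt_of_sq_le ?_
    rw [le_div_iff₀ hc, mul_comm]
    calc c * ‖z.2 i‖ ^ 2 ≤ z.2 i ⬝ᵥ (pencilEval A0 A x *ᵥ z.2 i) := hcU _ (hz.2 i)
      _ ≤ ∑ i, z.2 i ⬝ᵥ (pencilEval A0 A x *ᵥ z.2 i) :=
        Finset.single_le_sum (fun i _ => hnonneg i) (Finset.mem_univ i)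
      _ ≤ _ := le_add_of_nonneg_left hz.1
  calc ‖z‖ ≤ ‖z.1‖ + ‖z.2‖ := max_le_add_of_nonneg (norm_nonneg _) (norm_nonneg _)
    _ ≤ _ := by rw [Real.norm_of_nonneg hz.1]; gcongr; linarith

end Pencil

/-- If `S_A` has nonempty interior, the convex cone `C_A` is closed in the space of linear
polynomials, identified with `ℝ × ℝⁿ` via coefficients `(a₀, a) ↦ a₀ + ∑ aᵢ xᵢ`. -/
theorem stmt_5 {n α : ℕ} (A0 : Matrix (Fin α) (Fin α) ℝ)
    (A : Fin n → Matrix (Fin α) (Fin α) ℝ) (hA0 : A0.IsSymm) (hA : ∀ i, (A i).IsSymm)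
    (hint : (interior {x : Fin n → ℝ | (pencilEval A0 A x).PosSemidef}).Nonempty) :
    IsClosed {a : ℝ × (Fin n → ℝ) |
      ∃ c ≥ (0:ℝ), ∃ (k : ℕ) (u : Fin k → Fin α → ℝ),
        a.1 = c + ∑ i, u i ⬝ᵥ (A0 *ᵥ u i) ∧
        ∀ j, a.2 j = ∑ i, u i ⬝ᵥ (A j *ᵥ u i)} := by
  obtain ⟨x, hx⟩ := hint
  have hpsd : (pencilEval A0 A x).PosSemidef :=
    (interior_subset hx : x ∈ {x | (pencilEval A0 A x).PosSemidef})
  obtain ⟨U, hU⟩ := Submodule.exists_isCompl (LinearMap.ker (pencilEval A0 A x).mulVecLin)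
  obtain ⟨c, hc, hcU⟩ := hpsd.exists_pos_mul_norm_sq_le hU.symm.disjoint
  change IsClosed (pencilCone A0 A)
  rw [pencilCone_eq_image hA0 hA hU.symm fun w hw => mulVec_eq_zero_of_mem_interior hx hw]
  refine IsClosed.image_of_norm_le ?_ (continuous_pencilConeMap A0 A)
    (g := fun a => (a.1 + ∑ j, x j * a.2 j) + √((a.1 + ∑ j, x j * a.2 j) / c)) (by fun_prop)
    fun z hz => norm_le_of_pencilConeMap hpsd hc hcU hz
  simp only [Set.ofPred_and, Set.ofPred_forall]
  exact (isClosed_le continuous_const continuous_fst).inter (isClosed_iInter fun i =>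
    (Submodule.closed_of_finiteDimensional U).preimage ((continuous_apply i).comp continuous_snd))
end
end

section
/- (Easy direction of the linear Positivstellensatz) Let A be a linear pencil and f a linear polynomial. If there exist linear polynomials ℓ_1, ..., ℓ_n, quadratic sos-matrices S_1, ..., S_n, a PSD matrix S, and c ≥ 0 with ℓ_i² + tr(A S_i) ∈ (ℓ_1, ..., ℓ_{i-1}) for each i and f - c - tr(A S) ∈ (ℓ_1, ..., ℓ_n), then f(x) ≥ 0 for every x with A(x) ⪰ 0. -/
open MvPolynomial Matrix
attribute [local instance] Matrix.frobeniusNormedAddCommGroup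

noncomputable section

/-!
At a point `x` with `A(x) ⪰ 0`, `tr(A(x) T) ≥ 0` for every PSD matrix `T`, and the value at `x`
of an sos-matrix is PSD. So `ℓᵢ(x)² = -tr(A(x) Sᵢ(x)) ≤ 0` once the earlier `ℓⱼ(x)` vanish, and by
induction every `ℓᵢ` vanishes at `x`. The second certificate then reads
`f(x) = c + tr(A(x) S) ≥ 0`.
-/

open scoped MatrixOrder ComplexOrder in
theorem Matrix.PosSemidef.trace_mul_nonneg {m 𝕜 : Type*} [Fintype m] [RCLike 𝕜]
    {P B : Matrix m m 𝕜} (hP : P.PosSemidef) (hB : B.PosSemidef) : 0 ≤ (P * B).trace := by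
  classical
  obtain ⟨R, rfl⟩ := CStarAlgebra.nonneg_iff_eq_star_mul_self.mp hB.nonneg
  rw [← mul_assoc, Matrix.trace_mul_cycle, star_eq_conjTranspose]
  exact (hP.mul_mul_conjTranspose_same R).trace_nonneg

theorem RingHom.map_trace_mul {m R S : Type*} [Fintype m] [CommSemiring R] [CommSemiring S]
    (f : R →+* S) (M N : Matrix m m R) : f (M * N).trace = (M.map f * N.map f).trace := by
  rw [AddMonoidHom.map_trace, Matrix.map_mul]

theorem map_eval_pencilPoly {n α : ℕ} (A0 : Matrix (Fin α) (Fin α) ℝ)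
    (A : Fin n → Matrix (Fin α) (Fin α) ℝ) (x : Fin n → ℝ) :
    (pencilPoly A0 A).map (eval x) = pencilEval A0 A x := by
  ext a b
  simp [pencilPoly, pencilEval, Matrix.sum_apply]

theorem IsSosMatrix.posSemidef_map_eval {n α : ℕ} {S : Matrix (Fin α) (Fin α) (RP n)}
    (hS : IsSosMatrix S) (x : Fin n → ℝ) : (S.map (eval x)).PosSemidef := by
  obtain ⟨k, v, rfl⟩ := hS
  have hmap : (∑ j, vecMulVec (v j) (v j)).map (eval x) =
      ∑ j, vecMulVec (eval x ∘ v j) (star (eval x ∘ v j)) := by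
    ext a b
    simp [vecMulVec_apply, Matrix.sum_apply]
  rw [hmap]
  exact posSemidef_sum _ fun j _ => posSemidef_vecMulVec_self_star _

theorem mem_ker_of_sq_add_mem_span {R S ι : Type*} [CommRing R] [CommRing S] [LinearOrder S]
    [IsStrictOrderedRing S] [Preorder ι] [WellFoundedLT ι] (φ : R →+* S) (ℓ t : ι → R)
    (ht : ∀ i, 0 ≤ φ (t i)) (hℓ : ∀ i, ℓ i ^ 2 + t i ∈ Ideal.span (ℓ '' {j | j < i})) (i : ι) :
    ℓ i ∈ RingHom.ker φ := by
  induction i using WellFoundedLT.induction with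
  | _ i ih =>
    have hspan : Ideal.span (ℓ '' {j | j < i}) ≤ RingHom.ker φ :=
      Ideal.span_le.mpr (by rintro _ ⟨j, hj, rfl⟩; exact ih j hj)
    have h0 : φ (ℓ i) ^ 2 + φ (t i) = 0 := by
      simpa using hspan (hℓ i)
    rw [RingHom.mem_ker]
    nlinarith [sq_nonneg (φ (ℓ i)), ht i]

theorem eval_trace_pencilPoly_mul_nonneg {n α : ℕ} {A0 : Matrix (Fin α) (Fin α) ℝ}
    {A : Fin n → Matrix (Fin α) (Fin α) ℝ} {x : Fin n → ℝ} (hx : (pencilEval A0 A x).PosSemidef)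
    {M : Matrix (Fin α) (Fin α) (RP n)} (hM : (M.map (eval x)).PosSemidef) :
    0 ≤ eval x (pencilPoly A0 A * M).trace := by
  rw [RingHom.map_trace_mul, map_eval_pencilPoly]
  exact hx.trace_mul_nonneg hM

theorem stmt_8_general {n α : ℕ} (A0 : Matrix (Fin α) (Fin α) ℝ)
    (A : Fin n → Matrix (Fin α) (Fin α) ℝ)
    (f : RP n)
    (ℓ : Fin n → RP n)
    (Smat : Fin n → Matrix (Fin α) (Fin α) (RP n))
    (hSmat : ∀ i, IsSosMatrix (Smat i) ∧ ∀ a b, ((Smat i) a b).totalDegree ≤ 2)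
    (S : Matrix (Fin α) (Fin α) ℝ) (hS : S.PosSemidef) (c : ℝ) (hc : 0 ≤ c)
    (h1 : ∀ i : Fin n, ℓ i ^ 2 + (pencilPoly A0 A * Smat i).trace ∈
        Ideal.span (ℓ '' {j : Fin n | j < i}))
    (h2 : f - C c - (pencilPoly A0 A * S.map C).trace ∈ Ideal.span (Set.range ℓ)) :
    ∀ x : Fin n → ℝ, (pencilEval A0 A x).PosSemidef → 0 ≤ eval x f := by
  intro x hx
  have hℓ : ∀ i, ℓ i ∈ RingHom.ker (eval x) :=
    mem_ker_of_sq_add_mem_span (eval x) ℓ _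
      (fun i => eval_trace_pencilPoly_mul_nonneg hx ((hSmat i).1.posSemidef_map_eval x)) h1
  have hcert : f - C c - (pencilPoly A0 A * S.map C).trace ∈ RingHom.ker (eval x) :=
    Ideal.span_le.mpr (Set.range_subset_iff.mpr hℓ) h2
  have hSx : 0 ≤ eval x (pencilPoly A0 A * S.map C).trace :=
    eval_trace_pencilPoly_mul_nonneg hx (by simpa [Matrix.map_map, Function.comp_def] using hS)
  rw [RingHom.mem_ker, map_sub, map_sub, eval_C] at hcert
  linarith

/-- Easy direction of the linear Positivstellensatz: the algebraic certificate implies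
nonnegativity of `f` on `S_A`. -/
theorem stmt_8 {n α : ℕ} (A0 : Matrix (Fin α) (Fin α) ℝ)
    (A : Fin n → Matrix (Fin α) (Fin α) ℝ) (hA0 : A0.IsSymm) (hA : ∀ i, (A i).IsSymm)
    (f : RP n) (hf : f.totalDegree ≤ 1)
    (ℓ : Fin n → RP n) (hℓ : ∀ i, (ℓ i).totalDegree ≤ 1)
    (Smat : Fin n → Matrix (Fin α) (Fin α) (RP n))
    (hSmat : ∀ i, IsSosMatrix (Smat i) ∧ ∀ a b, ((Smat i) a b).totalDegree ≤ 2)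
    (S : Matrix (Fin α) (Fin α) ℝ) (hS : S.PosSemidef) (c : ℝ) (hc : 0 ≤ c)
    (h1 : ∀ i : Fin n, ℓ i ^ 2 + (pencilPoly A0 A * Smat i).trace ∈
        Ideal.span (ℓ '' {j : Fin n | j < i}))
    (h2 : f - C c - (pencilPoly A0 A * S.map C).trace ∈ Ideal.span (Set.range ℓ)) :
    ∀ x : Fin n → ℝ, (pencilEval A0 A x).PosSemidef → 0 ≤ eval x f :=
  stmt_8_general A0 A f ℓ Smat hSmat S hS c hc h1 h2
end
end

section
/- Let d, e ∈ ℕ₀, let I be a real radical ideal of ℝ[x_1,...,x_n], and let U be a symmetric s(d)×s(d) real matrix such that the polynomial v_d^* U v_d lies in I, where v_d is the column vector of all monomials of degree at most d and s(d) is their number. If W is an s(e)×s(d) real matrix with U ⪰ W^* W, then the polynomial v_e^* W v_d lies in I. -/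
open MvPolynomial Matrix
attribute [local instance] Matrix.frobeniusNormedAddCommGroup

noncomputable section

/-- Index type for monomials of total degree at most `d` in `n` variables.
(A monomial of total degree ≤ d has each exponent ≤ d, so this enumerates exactly the
`s(d)` monomials of degree ≤ d.) -/
def MonIdx (n d : ℕ) : Type := {m : Fin n → Fin (d+1) // (∑ i, (m i : ℕ)) ≤ d}

instance (n d : ℕ) : Fintype (MonIdx n d) := by unfold MonIdx; infer_instance

instance (n d : ℕ) : DecidableEq (MonIdx n d) := by unfold MonIdx; infer_instance

/-- The vector of all monomials of degree at most `d`. -/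
def vecx (n d : ℕ) : MonIdx n d → RP n := fun m => ∏ i, (X i : RP n) ^ (m.1 i : ℕ)

/-- An ideal is real radical if `f^{2k} + s ∈ I` with `s` a sum of squares forces `f ∈ I`. -/
def IsRealRadical {n : ℕ} (I : Ideal (RP n)) : Prop :=
  ∀ (f : RP n) (k : ℕ), 1 ≤ k → ∀ s : RP n, IsSos s → f ^ (2 * k) + s ∈ I → f ∈ I

/-! Write `U - WᵀW = BᵀB`. Then `v_dᵀ U v_d = ∑ⱼ (B v_d)ⱼ² + ∑ₘ (W v_d)ₘ²` is a sum of squares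
lying in `I`, so real radicality puts every entry `(W v_d)ₘ` in `I`, and with them
`v_eᵀ W v_d = ∑ₘ (v_e)ₘ (W v_d)ₘ`. -/

open scoped MatrixOrder in
theorem Matrix.PosSemidef.exists_eq_transpose_mul_self {m : Type*} [Fintype m]
    {A : Matrix m m ℝ} (hA : A.PosSemidef) : ∃ B : Matrix m m ℝ, A = Bᵀ * B := by
  classical
  obtain ⟨B, rfl⟩ := CStarAlgebra.nonneg_iff_eq_star_mul_self.mp hA.nonneg
  exact ⟨B, by rw [star_eq_conjTranspose, conjTranspose_eq_transpose_of_trivial]⟩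

theorem Matrix.dotProduct_transpose_mul_self_mulVec {R m k : Type*} [CommSemiring R] [Fintype m]
    [Fintype k] (M : Matrix k m R) (v : m → R) :
    v ⬝ᵥ ((Mᵀ * M) *ᵥ v) = ∑ j, (M *ᵥ v) j ^ 2 := by
  rw [← mulVec_mulVec, dotProduct_mulVec, vecMul_transpose]
  simp only [dotProduct, sq]

theorem Matrix.dotProduct_map_transpose_mul_self_mulVec {R S m k : Type*} [CommSemiring R]
    [CommSemiring S] [Fintype m] [Fintype k] (f : R →+* S) (M : Matrix k m R) (v : m → S) :
    v ⬝ᵥ ((Mᵀ * M).map f *ᵥ v) = ∑ j, (M.map f *ᵥ v) j ^ 2 := by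
  rw [Matrix.map_mul, transpose_map, dotProduct_transpose_mul_self_mulVec]

theorem IsSos.add {n : ℕ} {p q : RP n} (hp : IsSos p) (hq : IsSos q) : IsSos (p + q) := by
  obtain ⟨k, u, rfl⟩ := hp
  obtain ⟨l, w, rfl⟩ := hq
  exact ⟨k + l, Fin.addCases u w, by simp [Fin.sum_univ_add]⟩

theorem isSos_sum_sq {n : ℕ} {ι : Type*} (s : Finset ι) (q : ι → RP n) :
    IsSos (∑ i ∈ s, q i ^ 2) := by
  refine ⟨s.card, fun j => q (s.equivFin.symm j), ?_⟩
  rw [← Finset.sum_coe_sort]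
  exact (Equiv.sum_comp s.equivFin.symm (fun i => q i ^ 2)).symm

theorem IsRealRadical.mem_of_add_sum_sq_mem {n : ℕ} {I : Ideal (RP n)} (hI : IsRealRadical I)
    {s : RP n} (hs : IsSos s) {ι : Type*} [Fintype ι] (q : ι → RP n)
    (h : s + ∑ i, q i ^ 2 ∈ I) (i : ι) : q i ∈ I := by
  classical
  refine hI (q i) 1 le_rfl (s + ∑ j ∈ Finset.univ.erase i, q j ^ 2)
    (hs.add (isSos_sum_sq _ _)) ?_
  rwa [← Finset.add_sum_erase _ _ (Finset.mem_univ i), add_left_comm, ← mul_one 2] at h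

theorem stmt_9_general {n : ℕ} (d e : ℕ) (I : Ideal (RP n)) (hI : IsRealRadical I)
    (U : Matrix (MonIdx n d) (MonIdx n d) ℝ)
    (hUI : (vecx n d) ⬝ᵥ ((U.map C) *ᵥ vecx n d) ∈ I)
    (W : Matrix (MonIdx n e) (MonIdx n d) ℝ) (hW : (U - Wᵀ * W).PosSemidef) :
    (vecx n e) ⬝ᵥ ((W.map C) *ᵥ vecx n d) ∈ I := by
  obtain ⟨B, hB⟩ := hW.exists_eq_transpose_mul_self
  have hWv : ∀ m, (W.map C *ᵥ vecx n d) m ∈ I := by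
    rw [← sub_add_cancel U (Wᵀ * W), hB, Matrix.map_add C (map_add C), add_mulVec, dotProduct_add,
      dotProduct_map_transpose_mul_self_mulVec, dotProduct_map_transpose_mul_self_mulVec] at hUI
    exact hI.mem_of_add_sum_sq_mem (isSos_sum_sq _ _) _ hUI
  exact I.sum_mem fun m _ => I.mul_mem_left _ (hWv m)

/-- If `I` is real radical, `v_d^* U v_d ∈ I` and `U ⪰ W^* W`, then `v_e^* W v_d ∈ I`. -/
theorem stmt_9 {n : ℕ} (d e : ℕ) (I : Ideal (RP n)) (hI : IsRealRadical I)
    (U : Matrix (MonIdx n d) (MonIdx n d) ℝ) (hU : U.IsSymm)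
    (hUI : (vecx n d) ⬝ᵥ ((U.map C) *ᵥ vecx n d) ∈ I)
    (W : Matrix (MonIdx n e) (MonIdx n d) ℝ) (hW : (U - Wᵀ * W).PosSemidef) :
    (vecx n e) ⬝ᵥ ((W.map C) *ᵥ vecx n d) ∈ I :=
  stmt_9_general d e I hI U hUI W hW
end
end

section
/- Let ℓ_1, ..., ℓ_t be linear polynomials and q_1, ..., q_t quadratic polynomials in ℝ[x_1,...,x_n]. Let U be the (unique) symmetric s(1)×s(1) matrix with v_1^* U v_1 = ℓ_1² + ... + ℓ_t², where v_1 = (1, x_1, ..., x_n)^*. Then there exist λ > 0 and a matrix W ∈ ℝ^{s(2)×s(1)} such that λU ⪰ W^* W and v_2^* W v_1 = ℓ_1 q_1 + ... + ℓ_t q_t, where v_2 is the vector of monomials of degree ≤ 2. -/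
open MvPolynomial Matrix
attribute [local instance] Matrix.frobeniusNormedAddCommGroup

noncomputable section

/-!
Write `ℓ = Aᵀ v₁` and `q = Bᵀ v₂` with real coefficient matrices `A`, `B`. Every vector
with entry `1` at the constant monomial is `v₁` evaluated at a point of `ℝⁿ`, and a quadratic
form vanishing on that affine hyperplane vanishes everywhere; hence
`v₁^* U v₁ = ∑ ℓᵢ² = v₁^* A Aᵀ v₁` forces `yᵀ U y = |Aᵀ y|²` for all real `y`. With `W = B Aᵀ`
we get `v₂^* W v₁ = q · ℓ`, and `yᵀ (λ U - Wᵀ W) y = λ |Aᵀ y|² - |B Aᵀ y|² ≥ 0` as soon as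
`λ` bounds `‖B‖²`, e.g. by Cauchy–Schwarz `λ = 1 + ∑ B_{kj}²`.
-/

section QuadraticForms

variable {ι κ μ : Type*} [Fintype ι] [Fintype κ] [Fintype μ]

theorem exists_dotProduct_mulVec_self_le (B : Matrix μ κ ℝ) :
    ∃ lam > (0 : ℝ), ∀ z : κ → ℝ, B *ᵥ z ⬝ᵥ B *ᵥ z ≤ lam * (z ⬝ᵥ z) := by
  refine ⟨1 + ∑ k, ∑ j, B k j ^ 2, by positivity, fun z => ?_⟩
  have hz : 0 ≤ z ⬝ᵥ z := Finset.sum_nonneg fun j _ => mul_self_nonneg (z j)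
  calc B *ᵥ z ⬝ᵥ B *ᵥ z = ∑ k, (∑ j, B k j * z j) ^ 2 := by
        simp only [dotProduct, mulVec, sq]
    _ ≤ ∑ k, (∑ j, B k j ^ 2) * (z ⬝ᵥ z) := by
        gcongr with k
        simpa only [dotProduct, sq] using Finset.sum_mul_sq_le_sq_mul_sq _ (B k) z
    _ = (∑ k, ∑ j, B k j ^ 2) * (z ⬝ᵥ z) := (Finset.sum_mul ..).symm
    _ ≤ (1 + ∑ k, ∑ j, B k j ^ 2) * (z ⬝ᵥ z) := by nlinarith

theorem dotProduct_mulVec_self_eq_zero_of_apply_eq_one [DecidableEq ι] {D : Matrix ι ι ℝ}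
    (i₀ : ι) (hD : ∀ y, y i₀ = 1 → y ⬝ᵥ D *ᵥ y = 0) (y : ι → ℝ) : y ⬝ᵥ D *ᵥ y = 0 := by
  have h_ne : ∀ y : ι → ℝ, y i₀ ≠ 0 → y ⬝ᵥ D *ᵥ y = 0 := fun y hy => by
    have := hD ((y i₀)⁻¹ • y) (by simp [hy])
    simp only [mulVec_smul, dotProduct_smul, smul_dotProduct, smul_eq_mul] at this
    simpa [hy] using this
  by_cases hy : y i₀ = 0
  · set e : ι → ℝ := Pi.single i₀ 1
    -- parallelogram law, with `y ± e` off the hyperplane `y i₀ = 0`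
    have hplus := h_ne (y + e) (by simp [e, hy])
    have hminus := h_ne (y - e) (by simp [e, hy])
    have he := h_ne e (by simp [e])
    simp only [mulVec_add, mulVec_sub, dotProduct_add, dotProduct_sub, add_dotProduct,
      sub_dotProduct] at hplus hminus
    linarith
  · exact h_ne y hy

theorem posSemidef_smul_sub_transpose_mul_self {U : Matrix ι ι ℝ} (hU : U.IsSymm)
    {A : Matrix ι κ ℝ} (hUA : ∀ y, y ⬝ᵥ U *ᵥ y = Aᵀ *ᵥ y ⬝ᵥ Aᵀ *ᵥ y)
    {B : Matrix μ κ ℝ} {lam : ℝ} (hB : ∀ z, B *ᵥ z ⬝ᵥ B *ᵥ z ≤ lam * (z ⬝ᵥ z)) :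
    (lam • U - (B * Aᵀ)ᵀ * (B * Aᵀ)).PosSemidef := by
  refine .of_dotProduct_mulVec_nonneg ?_ fun y => ?_
  · rw [IsHermitian, conjTranspose_eq_transpose_of_trivial, transpose_sub, transpose_smul,
      hU.eq, transpose_mul, transpose_transpose]
  · have hW : y ⬝ᵥ ((B * Aᵀ)ᵀ * (B * Aᵀ)) *ᵥ y = B *ᵥ Aᵀ *ᵥ y ⬝ᵥ B *ᵥ Aᵀ *ᵥ y := by
      rw [← mulVec_mulVec, dotProduct_mulVec, ← mulVec_transpose, transpose_transpose,
        ← mulVec_mulVec]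
    rw [star_trivial, sub_mulVec, dotProduct_sub, smul_mulVec, dotProduct_smul, smul_eq_mul,
      hUA, hW]
    linarith [hB (Aᵀ *ᵥ y)]

end QuadraticForms

namespace MonIdx

variable {n d : ℕ}

def exponent (m : MonIdx n d) : Fin n →₀ ℕ :=
  Finsupp.equivFunOnFinite.symm fun i => (m.1 i : ℕ)

theorem exponent_injective : Function.Injective (exponent (n := n) (d := d)) := fun _ _ h =>
  Subtype.ext <| funext fun i => Fin.ext (DFunLike.congr_fun h i)

theorem exists_exponent_eq {v : Fin n →₀ ℕ} (hv : ∑ i, v i ≤ d) :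
    ∃ m : MonIdx n d, m.exponent = v :=
  ⟨⟨fun i => ⟨v i, Nat.lt_succ_of_le <|
      (Finset.single_le_sum (fun i _ => Nat.zero_le (v i)) (Finset.mem_univ i)).trans hv⟩, hv⟩,
    Finsupp.ext fun _ => rfl⟩

def const (n : ℕ) : MonIdx n 1 := ⟨0, by simp⟩

def var (i : Fin n) : MonIdx n 1 :=
  ⟨fun j => if j = i then 1 else 0, by simp [apply_ite (fun k : Fin 2 => (k : ℕ))]⟩

theorem eq_const_or_eq_var (m : MonIdx n 1) : m = const n ∨ ∃ i, m = var i := by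
  by_cases h : ∃ i, m.1 i ≠ 0
  · obtain ⟨i, hi⟩ := h
    refine Or.inr ⟨i, Subtype.ext <| funext fun j => Fin.ext ?_⟩
    have hi' : (m.1 i : ℕ) ≠ 0 := Fin.val_ne_iff.mpr hi
    by_cases hj : j = i
    · subst hj
      have := (m.1 j).isLt
      simp only [var, if_pos, Fin.val_one]
      omega
    · have := Finset.add_le_sum (fun k _ => Nat.zero_le (m.1 k : ℕ)) (Finset.mem_univ i)
        (Finset.mem_univ j) (Ne.symm hj)
      simp only [var, if_neg hj, Fin.val_zero]
      have := m.2
      omega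
  · push Not at h
    exact Or.inl (Subtype.ext (funext h))

end MonIdx

section MonomialVectors

variable {n d : ℕ}

theorem vecx_eq_monomial (m : MonIdx n d) : vecx n d m = monomial m.exponent 1 := by
  rw [monomial_eq, Finsupp.prod_pow]
  simp [vecx, MonIdx.exponent]

theorem eval_vecx_const (x : Fin n → ℝ) : eval x (vecx n 1 (MonIdx.const n)) = 1 := by
  simp [vecx, MonIdx.const]

theorem eval_vecx_var (x : Fin n → ℝ) (i : Fin n) : eval x (vecx n 1 (MonIdx.var i)) = x i := by
  simp [vecx, MonIdx.var, apply_ite (fun k : Fin 2 => (k : ℕ)), pow_ite]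

theorem exists_eval_vecx_eq {y : MonIdx n 1 → ℝ} (hy : y (MonIdx.const n) = 1) :
    ∃ x : Fin n → ℝ, (fun m => eval x (vecx n 1 m)) = y := by
  refine ⟨fun i => y (MonIdx.var i), funext fun m => ?_⟩
  rcases m.eq_const_or_eq_var with rfl | ⟨i, rfl⟩
  · rw [eval_vecx_const, hy]
  · rw [eval_vecx_var]

theorem vecx_dotProduct_coeff {p : RP n} (hp : p.totalDegree ≤ d) :
    vecx n d ⬝ᵥ (fun m => C (coeff m.exponent p)) = p := by
  have hsupp : p.support ⊆ Finset.univ.image MonIdx.exponent := fun v hv => by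
    have hdeg : ∑ i, v i ≤ d := by
      rw [← Finsupp.sum_fintype v (fun _ e => e) fun _ => rfl]
      exact (le_totalDegree hv).trans hp
    obtain ⟨m, hm⟩ := MonIdx.exists_exponent_eq hdeg
    exact Finset.mem_image.mpr ⟨m, Finset.mem_univ m, hm⟩
  calc vecx n d ⬝ᵥ (fun m => C (coeff m.exponent p))
      = ∑ m : MonIdx n d, monomial m.exponent (coeff m.exponent p) := by
        simp only [dotProduct, vecx_eq_monomial, mul_comm _ (C _), C_mul_monomial, mul_one]
    _ = ∑ v ∈ Finset.univ.image MonIdx.exponent, monomial v (coeff v p) :=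
        (Finset.sum_image (f := fun v => monomial v (coeff v p))
          fun _ _ _ _ h => MonIdx.exponent_injective h).symm
    _ = ∑ v ∈ p.support, monomial v (coeff v p) :=
        (Finset.sum_subset hsupp fun v _ hv => by rw [notMem_support_iff.mp hv, map_zero]).symm
    _ = p := p.as_sum.symm

def coeffMatrix (d : ℕ) {ι : Type*} (p : ι → RP n) : Matrix (MonIdx n d) ι ℝ :=
  of fun m i => coeff m.exponent (p i)

theorem vecx_vecMul_coeffMatrix {ι : Type*} {p : ι → RP n} (hp : ∀ i, (p i).totalDegree ≤ d) :
    vecx n d ᵥ* (coeffMatrix d p).map C = p :=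
  funext fun i => vecx_dotProduct_coeff (hp i)

theorem dotProduct_mulVec_eq_of_vecx {D E : Matrix (MonIdx n 1) (MonIdx n 1) ℝ}
    (h : vecx n 1 ⬝ᵥ D.map C *ᵥ vecx n 1 = vecx n 1 ⬝ᵥ E.map C *ᵥ vecx n 1)
    (y : MonIdx n 1 → ℝ) : y ⬝ᵥ D *ᵥ y = y ⬝ᵥ E *ᵥ y := by
  classical
  rw [← sub_eq_zero, ← dotProduct_sub, ← sub_mulVec]
  refine dotProduct_mulVec_self_eq_zero_of_apply_eq_one (MonIdx.const n) (fun y hy => ?_) y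
  obtain ⟨x, rfl⟩ := exists_eval_vecx_eq hy
  have := congrArg (eval x) (sub_eq_zero.mpr h)
  simpa [dotProduct, mulVec, map_sum, Finset.mul_sum, Finset.sum_sub_distrib, mul_sub,
    sub_mul] using this

end MonomialVectors

/-- Given linear `ℓᵢ` and quadratic `qᵢ`, and `U` symmetric with
`v₁^* U v₁ = ∑ ℓᵢ²`, there are `λ > 0` and `W` with `λU ⪰ W^*W` and
`v₂^* W v₁ = ∑ ℓᵢ qᵢ`. -/
theorem stmt_10 {n t : ℕ} (ℓ : Fin t → RP n) (hℓ : ∀ i, (ℓ i).totalDegree ≤ 1)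
    (q : Fin t → RP n) (hq : ∀ i, (q i).totalDegree ≤ 2)
    (U : Matrix (MonIdx n 1) (MonIdx n 1) ℝ) (hU : U.IsSymm)
    (hUeq : (vecx n 1) ⬝ᵥ ((U.map C) *ᵥ vecx n 1) = ∑ i, ℓ i ^ 2) :
    ∃ lam > (0:ℝ), ∃ W : Matrix (MonIdx n 2) (MonIdx n 1) ℝ,
      (lam • U - Wᵀ * W).PosSemidef ∧
      (vecx n 2) ⬝ᵥ ((W.map C) *ᵥ vecx n 1) = ∑ i, ℓ i * q i := by
  set A := coeffMatrix 1 ℓ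
  set B := coeffMatrix 2 q
  have hA : vecx n 1 ᵥ* A.map C = ℓ := vecx_vecMul_coeffMatrix hℓ
  have hB : vecx n 2 ᵥ* B.map C = q := vecx_vecMul_coeffMatrix hq
  have hgram : vecx n 1 ⬝ᵥ (A * Aᵀ).map C *ᵥ vecx n 1 = ∑ i, ℓ i ^ 2 := by
    rw [Matrix.map_mul, transpose_map, ← mulVec_mulVec, dotProduct_mulVec, mulVec_transpose, hA]
    simp only [dotProduct, sq]
  have hUA : ∀ y, y ⬝ᵥ U *ᵥ y = Aᵀ *ᵥ y ⬝ᵥ Aᵀ *ᵥ y := fun y => by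
    rw [dotProduct_mulVec_eq_of_vecx (hUeq.trans hgram.symm) y, ← mulVec_mulVec,
      dotProduct_mulVec, mulVec_transpose]
  obtain ⟨lam, hlam, hBlam⟩ := exists_dotProduct_mulVec_self_le B
  refine ⟨lam, hlam, B * Aᵀ, posSemidef_smul_sub_transpose_mul_self hU hUA hBlam, ?_⟩
  rw [Matrix.map_mul, transpose_map, ← mulVec_mulVec, dotProduct_mulVec, mulVec_transpose, hA, hB]
  simp only [dotProduct, mul_comm]
end
end

section
/- (Linear elimination lemma) Let d ∈ ℕ, f ∈ ℝ[x]_d, and let ℓ_1, ..., ℓ_t be linear polynomials such that f lies in the ideal generated by ℓ_1, ..., ℓ_t. Then either there exist polynomials p_1, ..., p_t of degree at most d-1 with f = p_1 ℓ_1 + ... + p_t ℓ_t, or there exist real numbers λ_1, ..., λ_t with λ_1 ℓ_1 + ... + λ_t ℓ_t = 1. -/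
open MvPolynomial Matrix
attribute [local instance] Matrix.frobeniusNormedAddCommGroup

noncomputable section

/-!
If the `ℓᵢ` have no common zero, then `1` is in their real span: otherwise a linear functional
`φ` on `ℝ[x]` with `φ 1 = 1` killing every `ℓᵢ` exists, and on polynomials of degree `≤ 1` it is
evaluation at the point `(φ xⱼ)ⱼ`, which would be a common zero.
If they have a common zero, translate it to the origin, so that the `ℓᵢ` become linear forms.
In `f = ∑ gᵢ ℓᵢ` the components of the `gᵢ` of degree `≥ d` then only feed components of `f` of
degree `> d`, which vanish; truncating the `gᵢ` below degree `d` and translating back gives the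
cofactors of degree `≤ d - 1`.
-/

namespace MvPolynomial

section CommSemiring

variable {σ τ R : Type*} [CommSemiring R]

theorem totalDegree_aeval_le_mul {g : σ → MvPolynomial τ R} {k : ℕ}
    (hg : ∀ i, (g i).totalDegree ≤ k) (p : MvPolynomial σ R) :
    (aeval g p).totalDegree ≤ p.totalDegree * k := by
  conv_lhs => rw [p.as_sum, map_sum]
  refine totalDegree_finsetSum_le fun m hm => ?_
  rw [aeval_monomial, Algebra.algebraMap_eq_smul_one, smul_one_mul]
  calc _ ≤ (m.prod fun i e => g i ^ e).totalDegree := totalDegree_smul_le _ _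
    _ ≤ ∑ i ∈ m.support, (g i ^ m i).totalDegree := totalDegree_finsetProd _ _
    _ ≤ ∑ i ∈ m.support, m i * k :=
        Finset.sum_le_sum fun i _ => (totalDegree_pow _ _).trans (Nat.mul_le_mul_left _ (hg i))
    _ ≤ p.totalDegree * k := by
        rw [← Finset.sum_mul]
        exact Nat.mul_le_mul_right _ (le_totalDegree hm)

attribute [local instance] gradedAlgebra in
theorem homogeneousComponent_mul_of_isHomogeneous {l : MvPolynomial σ R} {k : ℕ}
    (hl : l.IsHomogeneous k) (g : MvPolynomial σ R) (n : ℕ) :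
    homogeneousComponent n (g * l) =
      if k ≤ n then homogeneousComponent (n - k) g * l else 0 := by
  have hc (p : MvPolynomial σ R) (e : ℕ) :
      (DirectSum.decompose (homogeneousSubmodule σ R) p e : MvPolynomial σ R) =
        homogeneousComponent e p :=
    decomposition.decompose'_apply p e
  simpa only [hc] using
    DirectSum.coe_decompose_mul_of_right_mem (homogeneousSubmodule σ R) (a := g) n hl

theorem sum_homogeneousComponent_of_totalDegree_le {φ : MvPolynomial σ R} {d : ℕ}
    (h : φ.totalDegree ≤ d) : ∑ e ∈ Finset.range (d + 1), homogeneousComponent e φ = φ := by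
  conv_rhs => rw [← sum_homogeneousComponent φ]
  refine (Finset.sum_subset (Finset.range_subset_range.2 (by omega)) fun e _ he => ?_).symm
  exact homogeneousComponent_eq_zero _ _ (by simpa using he)

theorem totalDegree_sum_homogeneousComponent_range_le (g : MvPolynomial σ R) (d : ℕ) :
    (∑ e ∈ Finset.range d, homogeneousComponent e g).totalDegree ≤ d - 1 :=
  totalDegree_finsetSum_le fun e he =>
    (homogeneousComponent_isHomogeneous e g).totalDegree_le.trans
      (by rw [Finset.mem_range] at he; omega)

theorem eq_sum_truncation_mul_of_isHomogeneous {ι : Type*} [Fintype ι]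
    {ℓ : ι → MvPolynomial σ R} (hℓ : ∀ i, (ℓ i).IsHomogeneous 1) {f : MvPolynomial σ R}
    {d : ℕ} (hf : f.totalDegree ≤ d) {g : ι → MvPolynomial σ R} (hfg : f = ∑ i, g i * ℓ i) :
    f = ∑ i, (∑ e ∈ Finset.range d, homogeneousComponent e (g i)) * ℓ i := by
  calc f = ∑ e ∈ Finset.range (d + 1), homogeneousComponent e f :=
        (sum_homogeneousComponent_of_totalDegree_le hf).symm
    _ = ∑ i, ∑ e ∈ Finset.range (d + 1), homogeneousComponent e (g i * ℓ i) := by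
        rw [Finset.sum_comm]
        simp only [hfg, map_sum]
    _ = ∑ i, (∑ e ∈ Finset.range d, homogeneousComponent e (g i)) * ℓ i := by
        refine Finset.sum_congr rfl fun i _ => ?_
        simp only [homogeneousComponent_mul_of_isHomogeneous (hℓ i), Finset.sum_range_succ',
          Finset.sum_mul]
        simp

end CommSemiring

section CommRing

variable {σ R : Type*} [CommRing R]

def translate (a : σ → R) : MvPolynomial σ R →ₐ[R] MvPolynomial σ R :=
  aeval fun i => X i + C (a i)

theorem translate_neg_translate (a : σ → R) (p : MvPolynomial σ R) :
    translate (-a) (translate a p) = p := by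
  suffices (translate (-a)).comp (translate a) = AlgHom.id R _ from congr($this p)
  ext i
  simp [translate]

theorem totalDegree_translate_le (a : σ → R) (p : MvPolynomial σ R) :
    (translate a p).totalDegree ≤ p.totalDegree := by
  refine (totalDegree_aeval_le_mul (k := 1) (fun i => ?_) p).trans (mul_one _).le
  exact (totalDegree_add _ _).trans (by simpa using (isHomogeneous_X R i).totalDegree_le)

theorem constantCoeff_translate (a : σ → R) (p : MvPolynomial σ R) :
    constantCoeff (translate a p) = eval a p := by
  suffices (eval 0).comp (translate a).toRingHom = eval a by
    rw [← eval_zero]; exact congr($this p)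
  ext <;> simp [translate]

theorem isHomogeneous_one_of_totalDegree_le_one {p : MvPolynomial σ R} (hp : p.totalDegree ≤ 1)
    (h0 : constantCoeff p = 0) : p.IsHomogeneous 1 := by
  intro m hm
  have hm0 : m ≠ 0 := by rintro rfl; exact hm h0
  have hle : m.degree ≤ 1 := (le_totalDegree (mem_support_iff.2 hm)).trans hp
  have hne : m.degree ≠ 0 := fun h => hm0 ((Finsupp.degree_eq_zero_iff m).1 h)
  change Finsupp.weight (fun _ => 1) m = 1
  rw [← Finsupp.degree_eq_weight_one]
  omega

theorem exists_sum_mul_totalDegree_le_of_eval_eq_zero {ι : Type*} [Fintype ι]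
    {ℓ : ι → MvPolynomial σ R} (hℓ : ∀ i, (ℓ i).totalDegree ≤ 1) {x : σ → R}
    (hx : ∀ i, eval x (ℓ i) = 0) {f : MvPolynomial σ R} (hf : f ∈ Ideal.span (Set.range ℓ))
    {d : ℕ} (hfd : f.totalDegree ≤ d) :
    ∃ p : ι → MvPolynomial σ R, (∀ i, (p i).totalDegree ≤ d - 1) ∧ f = ∑ i, p i * ℓ i := by
  obtain ⟨g, hfg⟩ := Ideal.mem_span_range_iff_exists_fun.1 hf
  have hℓx (i : ι) : (translate x (ℓ i)).IsHomogeneous 1 :=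
    isHomogeneous_one_of_totalDegree_le_one ((totalDegree_translate_le x _).trans (hℓ i))
      ((constantCoeff_translate x _).trans (hx i))
  have hfx : translate x f = ∑ i, translate x (g i) * translate x (ℓ i) := by
    simp only [← hfg, map_sum, map_mul]
  have htrunc := eq_sum_truncation_mul_of_isHomogeneous hℓx
    ((totalDegree_translate_le x f).trans hfd) hfx
  refine ⟨fun i => translate (-x) (∑ e ∈ Finset.range d, homogeneousComponent e
    (translate x (g i))), fun i => (totalDegree_translate_le _ _).trans
      (totalDegree_sum_homogeneousComponent_range_le _ _), ?_⟩
  calc f = translate (-x) (translate x f) := (translate_neg_translate x f).symm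
    _ = _ := by simp only [htrunc, map_sum, map_mul, translate_neg_translate]

end CommRing

section Field

variable {σ K : Type*} [Field K]

theorem apply_eq_eval_of_totalDegree_le_one (φ : MvPolynomial σ K →ₗ[K] K) (hφ : φ 1 = 1)
    {p : MvPolynomial σ K} (hp : p.totalDegree ≤ 1) : φ p = eval (fun i => φ (X i)) p := by
  have hX : Set.EqOn φ (aeval fun i => φ (X i)).toLinearMap (Set.range X) := by
    rintro _ ⟨i, rfl⟩
    simp
  have h1 : φ (homogeneousComponent 1 p) =
      eval (fun i => φ (X i)) (homogeneousComponent 1 p) := by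
    have hmem := homogeneousSubmodule_one_eq_span_X (σ := σ) (R := K) ▸
      homogeneousComponent_mem 1 p
    simpa using LinearMap.eqOn_span hX hmem
  have h0 (c : K) : φ (C c) = c := by rw [C_eq_smul_one, map_smul, hφ, smul_eq_mul, mul_one]
  rw [← sum_homogeneousComponent_of_totalDegree_le hp]
  simp [Finset.sum_range_succ, h0, h1, homogeneousComponent_zero]

theorem exists_eval_eq_zero_of_one_notMem_span {ι : Type*} {ℓ : ι → MvPolynomial σ K}
    (hℓ : ∀ i, (ℓ i).totalDegree ≤ 1)
    (h1 : (1 : MvPolynomial σ K) ∉ Submodule.span K (Set.range ℓ)) :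
    ∃ x : σ → K, ∀ i, eval x (ℓ i) = 0 := by
  obtain ⟨φ, hφ1, hker⟩ := Submodule.exists_le_ker_of_notMem h1
  set ψ := (φ 1)⁻¹ • φ
  refine ⟨fun j => ψ (X j), fun i => ?_⟩
  rw [← apply_eq_eval_of_totalDegree_le_one ψ (by simp [ψ, hφ1]) (hℓ i)]
  simp [ψ, LinearMap.mem_ker.1 (hker (Submodule.subset_span ⟨i, rfl⟩))]

end Field

end MvPolynomial

theorem stmt_11_general {n t : ℕ} (d : ℕ) (f : RP n) (hf : f.totalDegree ≤ d)
    (ℓ : Fin t → RP n) (hℓ : ∀ i, (ℓ i).totalDegree ≤ 1)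
    (hmem : f ∈ Ideal.span (Set.range ℓ)) :
    (∃ p : Fin t → RP n, (∀ i, (p i).totalDegree ≤ d - 1) ∧ f = ∑ i, p i * ℓ i) ∨
    (∃ lam : Fin t → ℝ, (∑ i, C (lam i) * ℓ i) = 1) := by
  by_cases h1 : (1 : RP n) ∈ Submodule.span ℝ (Set.range ℓ)
  · obtain ⟨lam, hlam⟩ := (Submodule.mem_span_range_iff_exists_fun ℝ).1 h1
    exact Or.inr ⟨lam, by simpa only [smul_eq_C_mul] using hlam⟩
  · obtain ⟨x, hx⟩ := exists_eval_eq_zero_of_one_notMem_span hℓ h1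
    exact Or.inl (exists_sum_mul_totalDegree_le_of_eval_eq_zero hℓ hx hmem hf)

/-- Linear elimination lemma. -/
theorem stmt_11 {n t : ℕ} (d : ℕ) (hd : 1 ≤ d) (f : RP n) (hf : f.totalDegree ≤ d)
    (ℓ : Fin t → RP n) (hℓ : ∀ i, (ℓ i).totalDegree ≤ 1)
    (hmem : f ∈ Ideal.span (Set.range ℓ)) :
    (∃ p : Fin t → RP n, (∀ i, (p i).totalDegree ≤ d - 1) ∧ f = ∑ i, p i * ℓ i) ∨
    (∃ lam : Fin t → ℝ, (∑ i, C (lam i) * ℓ i) = 1) :=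
  stmt_11_general d f hf ℓ hℓ hmem
end
end

section
/- For any quadratic module M in ℝ[x_1,...,x_n], one has the inclusion (√(supp M) − M) ∩ M ⊆ √(supp M), i.e., if p ∈ M can be written as p = g − q with g ∈ √(supp M) and q ∈ M, then p ∈ √(supp M). Here supp M = M ∩ (−M) and √ denotes the radical of an ideal. -/
open MvPolynomial Matrix
attribute [local instance] Matrix.frobeniusNormedAddCommGroup

noncomputable section

/-- A quadratic module in `ℝ[x]`: contains 1, closed under addition, and under
multiplication by squares. -/
def IsQuadraticModule {n : ℕ} (M : Set (RP n)) : Prop :=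
  (1 : RP n) ∈ M ∧ (∀ p ∈ M, ∀ q ∈ M, p + q ∈ M) ∧ (∀ a : RP n, ∀ p ∈ M, a ^ 2 * p ∈ M)

/-- Membership in the radical of the support `supp M = M ∩ (-M)`:
some power `f^k` (k ≥ 1) lies in both `M` and `-M`. -/
def InRadSupp {n : ℕ} (M : Set (RP n)) (f : RP n) : Prop :=
  ∃ k : ℕ, 1 ≤ k ∧ f ^ k ∈ M ∧ -(f ^ k) ∈ M

namespace QMAux

variable {n : ℕ} {M : Set (RP n)}

lemma zero_mem (hM : IsQuadraticModule M) : (0 : RP n) ∈ M := by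
  have := hM.2.2 0 1 hM.1
  simpa using this

lemma nsmul_mem (hM : IsQuadraticModule M) {m : RP n} (hm : m ∈ M) (c : ℕ) :
    c • m ∈ M := by
  induction c with
  | zero => simpa using zero_mem hM
  | succ c ih =>
      have := hM.2.1 _ ih _ hm
      simpa [succ_nsmul, add_mul] using this

/-- odd total degree products of two module elements lie in the module -/
lemma pow_mul_pow_mem (hM : IsQuadraticModule M) {a b : RP n} (ha : a ∈ M) (hb : b ∈ M)
    (e1 e2 : ℕ) (h : Odd (e1 + e2)) : a ^ e1 * b ^ e2 ∈ M := by
  obtain ⟨t, ht⟩ := h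
  rcases Nat.even_or_odd e1 with ⟨c, hc⟩ | ⟨c, hc⟩
  · obtain ⟨d, hd⟩ : ∃ d, e2 = 2 * d + 1 := ⟨e2 / 2, by omega⟩
    have key := hM.2.2 (a ^ c * b ^ d) b hb
    have : a ^ e1 * b ^ e2 = (a ^ c * b ^ d) ^ 2 * b := by
      rw [hc, hd]; ring
    rwa [this]
  · obtain ⟨d, hd⟩ : ∃ d, e2 = 2 * d := ⟨e2 / 2, by omega⟩
    have key := hM.2.2 (a ^ c * b ^ d) a ha
    have : a ^ e1 * b ^ e2 = (a ^ c * b ^ d) ^ 2 * a := by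
      rw [hc, hd]; ring
    rwa [this]

/-- the support is closed under multiplication by arbitrary polynomials -/
lemma supp_mul (hM : IsQuadraticModule M) {s : RP n} (hs : s ∈ M) (hs' : -s ∈ M)
    (a : RP n) : a * s ∈ M ∧ -(a * s) ∈ M := by
  have h4 : (C (4 : ℝ) : RP n) = 4 := by
    norm_num [map_ofNat]
  constructor
  · set b : RP n := C (4⁻¹ : ℝ) * a with hb
    have hba : (4 : RP n) * b = a := by
      rw [hb, ← h4, ← mul_assoc, ← C_mul]
      norm_num
    have key := hM.2.1 _ (hM.2.2 (b + 1) s hs) _ (hM.2.2 (b - 1) (-s) hs')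
    have : a * s = (b + 1) ^ 2 * s + (b - 1) ^ 2 * (-s) := by
      linear_combination s * hba.symm
    rwa [this]
  · set b : RP n := C (4⁻¹ : ℝ) * a with hb
    have hba : (4 : RP n) * b = a := by
      rw [hb, ← h4, ← mul_assoc, ← C_mul]
      norm_num
    have key := hM.2.1 _ (hM.2.2 (b - 1) s hs) _ (hM.2.2 (b + 1) (-s) hs')
    have : -(a * s) = (b - 1) ^ 2 * s + (b + 1) ^ 2 * (-s) := by
      linear_combination (-s) * hba.symm
    rwa [this]

end QMAux

/-- `(√(supp M) − M) ∩ M ⊆ √(supp M)` for any quadratic module `M`. -/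
theorem stmt_12 {n : ℕ} (M : Set (RP n)) (hM : IsQuadraticModule M)
    (p g q : RP n) (hp : p ∈ M) (hg : InRadSupp M g) (hq : q ∈ M) (hpgq : p = g - q) :
    InRadSupp M p := by
  obtain ⟨k, hk1, hgk, hgk'⟩ := hg
  have hgpq : g = p + q := by rw [hpgq]; ring
  -- r = p^(k+1) * g^k lies in supp M
  set r : RP n := p ^ (k + 1) * g ^ k with hr
  obtain ⟨hrM, hrM'⟩ := QMAux.supp_mul hM hgk hgk' (p ^ (k + 1))
  -- binomial expansion of r
  have hexp : r = ∑ i ∈ Finset.range (k + 1),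
      (k.choose i) • (p ^ (k + 1 + i) * q ^ (k - i)) := by
    rw [hr, hgpq, add_pow, Finset.mul_sum]
    refine Finset.sum_congr rfl fun i hi => ?_
    simp only [nsmul_eq_mul, pow_add]
    ring
  -- every term of the expansion is in M
  have hterm : ∀ i ∈ Finset.range (k + 1),
      (k.choose i) • (p ^ (k + 1 + i) * q ^ (k - i)) ∈ M := by
    intro i hi
    have hik : i ≤ k := Nat.lt_succ_iff.mp (Finset.mem_range.mp hi)
    refine QMAux.nsmul_mem hM ?_ _
    refine QMAux.pow_mul_pow_mem hM hp hq _ _ ?_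
    exact ⟨k, by omega⟩
  -- split off the top term
  have hsplit : r = (∑ i ∈ Finset.range k,
      (k.choose i) • (p ^ (k + 1 + i) * q ^ (k - i))) + p ^ (2 * k + 1) := by
    rw [hexp, Finset.sum_range_succ]
    simp [two_mul]
    ring
  have hT : (∑ i ∈ Finset.range k,
      (k.choose i) • (p ^ (k + 1 + i) * q ^ (k - i))) ∈ M := by
    refine Finset.sum_induction _ (· ∈ M) (fun a b ha hb => hM.2.1 a ha b hb)
      (QMAux.zero_mem hM) fun i hi => ?_
    exact hterm i (Finset.mem_range.mpr (Nat.lt_succ_of_lt (Finset.mem_range.mp hi)))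
  refine ⟨2 * k + 1, by omega, ?_, ?_⟩
  · have := hM.2.2 (p ^ k) p hp
    have heq : p ^ (2 * k + 1) = (p ^ k) ^ 2 * p := by ring
    rwa [heq]
  · have key := hM.2.1 _ hT _ hrM'
    have heq : -(p ^ (2 * k + 1)) = (∑ i ∈ Finset.range k,
        (k.choose i) • (p ^ (k + 1 + i) * q ^ (k - i))) + -r := by
      rw [hsplit]; ring
    rwa [heq]
end
end
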